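/- arXiv:1112.5750 — 6 statements merged into one kernel-verified Lean document; each statement's English description precedes it below -/
import Mathlib

section
/- An operator φ : E → F between normed spaces is an isometry if and only if its adjoint φ* : F* → E* maps the closed unit ball of F* onto the closed unit ball of E*. -/
/-!
Both inclusions of unit balls are tested against Hahn–Banach norming functionals: one at `φ x`
shows that `φ*` maps the ball into the ball exactly when `‖φ x‖ ≤ ‖x‖`, and one at `x` shows that
if every functional of norm `≤ 1` factors through `φ` then `‖x‖ ≤ ‖φ x‖`. Conversely, when `φ` is
an isometry, a functional on `E` is a functional on the range of `φ`, and Hahn–Banach extends it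
to `F` without increasing its norm.
-/

open Metric

section DualBall

variable {𝕜 E F : Type*} [RCLike 𝕜]

theorem LinearIsometry.exists_extension_norm_eq [NormedAddCommGroup E] [NormedSpace 𝕜 E]
    [NormedAddCommGroup F] [NormedSpace 𝕜 F] (ψ : E →ₗᵢ[𝕜] F) (g : StrongDual 𝕜 E) :
    ∃ f : StrongDual 𝕜 F, f.comp ψ.toContinuousLinearMap = g ∧ ‖f‖ = ‖g‖ := by
  let e := ψ.equivRange
  obtain ⟨f, hf_ext, hf_norm⟩ :=
    _root_.exists_extension_norm_eq _ (g.comp e.symm.toLinearIsometry.toContinuousLinearMap)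
  refine ⟨f, ?_, hf_norm.trans (g.opNorm_comp_linearIsometryEquiv e.symm)⟩
  ext x
  simpa [e] using hf_ext (e x)

variable [SeminormedAddCommGroup E] [NormedSpace 𝕜 E] [SeminormedAddCommGroup F] [NormedSpace 𝕜 F]

theorem image_comp_closedBall_subset_closedBall_iff (φ : E →L[𝕜] F) :
    (fun f : StrongDual 𝕜 F => f.comp φ) '' closedBall 0 1 ⊆ closedBall 0 1 ↔
      ∀ x, ‖φ x‖ ≤ ‖x‖ := by
  rw [Set.image_subset_iff]
  simp only [Set.subset_def, Set.mem_preimage, mem_closedBall_zero_iff]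
  constructor
  · intro h x
    obtain ⟨f, hf, hfx⟩ := exists_dual_vector'' 𝕜 (φ x)
    calc ‖φ x‖ = ‖f (φ x)‖ := by simp [hfx]
      _ ≤ ‖f.comp φ‖ * ‖x‖ := (f.comp φ).le_opNorm x
      _ ≤ ‖x‖ := mul_le_of_le_one_left (norm_nonneg x) (h f hf)
  · intro h f hf
    refine (f.comp φ).opNorm_le_bound zero_le_one fun x => ?_
    calc ‖f (φ x)‖ ≤ ‖f‖ * ‖φ x‖ := f.le_opNorm _
      _ ≤ 1 * ‖x‖ := mul_le_mul hf (h x) (norm_nonneg _) zero_le_one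

theorem norm_le_norm_apply_of_closedBall_subset_image_comp (φ : E →L[𝕜] F)
    (h : closedBall 0 1 ⊆ (fun f : StrongDual 𝕜 F => f.comp φ) '' closedBall 0 1) (x : E) :
    ‖x‖ ≤ ‖φ x‖ := by
  obtain ⟨g, hg, hgx⟩ := exists_dual_vector'' 𝕜 x
  obtain ⟨f, hf, rfl⟩ := h (mem_closedBall_zero_iff.mpr hg)
  calc ‖x‖ = ‖f (φ x)‖ := by simp [← ContinuousLinearMap.comp_apply, hgx]
    _ ≤ ‖f‖ * ‖φ x‖ := f.le_opNorm _
    _ ≤ ‖φ x‖ := mul_le_of_le_one_left (norm_nonneg _) (mem_closedBall_zero_iff.mp hf)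

end DualBall

/-- An operator `φ : E → F` between normed spaces is an isometry if and only if its adjoint
`φ* : F* → E*`, `f ↦ f ∘ φ`, maps the closed unit ball of `F*` onto the closed unit ball
of `E*` (i.e. `φ*` is a strict coisometry). -/
theorem stmt0 {E F : Type} [NormedAddCommGroup E] [NormedSpace ℂ E]
    [NormedAddCommGroup F] [NormedSpace ℂ F] (φ : E →L[ℂ] F) :
    (∀ x : E, ‖φ x‖ = ‖x‖) ↔
      (fun f : F →L[ℂ] ℂ => f.comp φ) '' Metric.closedBall 0 1 =
        Metric.closedBall (0 : E →L[ℂ] ℂ) 1 := by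
  constructor
  · intro h
    let ψ : E →ₗᵢ[ℂ] F := ⟨φ.toLinearMap, h⟩
    refine subset_antisymm ((image_comp_closedBall_subset_closedBall_iff φ).mpr fun x => (h x).le)
      fun g hg => ?_
    obtain ⟨f, hfg, hf⟩ := ψ.exists_extension_norm_eq g
    exact ⟨f, mem_closedBall_zero_iff.mpr (hf.trans_le (mem_closedBall_zero_iff.mp hg)), hfg⟩
  · intro h x
    exact le_antisymm ((image_comp_closedBall_subset_closedBall_iff φ).mp h.subset x)
      (norm_le_norm_apply_of_closedBall_subset_image_comp φ h.superset x)
end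

section
/- An operator φ : E → F between normed spaces is an isometry if and only if its adjoint φ* : F* → E* maps the open unit ball of F* onto the open unit ball of E*. -/
/-!
If `φ` is an isometry, `f ↦ f ∘ φ` does not increase norms, and every functional on `E` is of
the form `f ∘ φ` with `‖f‖` unchanged by Hahn–Banach applied on the range of `φ`. Conversely,
both inequalities between `‖φ x‖` and `‖x‖` are tested against functionals of norm `< 1`,
which suffices because the norm of a vector is attained by a norming functional.
-/

open Metric Set Filter Topology

section

variable {𝕜 E F : Type*} [RCLike 𝕜] [NormedAddCommGroup E] [NormedSpace 𝕜 E]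
  [NormedAddCommGroup F] [NormedSpace 𝕜 F]

theorem NormedSpace.norm_le_of_forall_dual_norm_lt_one {x : E} {c : ℝ}
    (h : ∀ f : StrongDual 𝕜 E, ‖f‖ < 1 → ‖f x‖ ≤ c) : ‖x‖ ≤ c := by
  obtain ⟨g, hg, hgx⟩ := exists_dual_vector'' 𝕜 x
  have hscaled : ∀ r ∈ Ioo (0 : ℝ) 1, r * ‖x‖ ≤ c := fun r ⟨hr0, hr1⟩ => by
    have hrg : ‖(r : 𝕜) • g‖ < 1 := by
      rw [norm_smul, RCLike.norm_ofReal, abs_of_pos hr0]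
      exact (mul_le_of_le_one_right hr0.le hg).trans_lt hr1
    simpa [hgx, norm_smul, abs_of_pos hr0] using h _ hrg
  have hlim : Tendsto (fun r : ℝ => r * ‖x‖) (𝓝[<] 1) (𝓝 (1 * ‖x‖)) :=
    (continuous_id.mul continuous_const).continuousWithinAt.tendsto
  rw [← one_mul ‖x‖]
  exact le_of_tendsto hlim (eventually_of_mem (Ioo_mem_nhdsLT zero_lt_one) hscaled)

theorem ContinuousLinearMap.norm_map_le_of_mapsTo_comp_ball {φ : E →L[𝕜] F}
    (h : MapsTo (fun f : StrongDual 𝕜 F => f.comp φ) (ball 0 1) (ball 0 1)) (x : E) :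
    ‖φ x‖ ≤ ‖x‖ :=
  NormedSpace.norm_le_of_forall_dual_norm_lt_one fun f hf =>
    calc ‖f (φ x)‖ ≤ ‖f.comp φ‖ * ‖x‖ := (f.comp φ).le_opNorm x
      _ ≤ ‖x‖ := mul_le_of_le_one_left (norm_nonneg x)
        (mem_ball_zero_iff.1 (h (mem_ball_zero_iff.2 hf))).le

theorem ContinuousLinearMap.norm_le_norm_map_of_ball_subset_image_comp {φ : E →L[𝕜] F}
    (h : ball 0 1 ⊆ (fun f : StrongDual 𝕜 F => f.comp φ) '' ball 0 1) (x : E) :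
    ‖x‖ ≤ ‖φ x‖ :=
  NormedSpace.norm_le_of_forall_dual_norm_lt_one fun g hg => by
    obtain ⟨f, hf, rfl⟩ := h (mem_ball_zero_iff.2 hg)
    calc ‖f (φ x)‖ ≤ ‖f‖ * ‖φ x‖ := f.le_opNorm (φ x)
      _ ≤ ‖φ x‖ := mul_le_of_le_one_left (norm_nonneg _) (mem_ball_zero_iff.1 hf).le

theorem ContinuousLinearMap.mapsTo_comp_ball_of_norm_map {φ : E →L[𝕜] F}
    (hφ : ∀ x, ‖φ x‖ = ‖x‖) :
    MapsTo (fun f : StrongDual 𝕜 F => f.comp φ) (ball 0 1) (ball 0 1) := fun f hf => by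
  rw [mem_ball_zero_iff] at hf ⊢
  calc ‖f.comp φ‖ ≤ ‖f‖ * ‖φ‖ := f.opNorm_comp_le φ
    _ ≤ ‖f‖ := mul_le_of_le_one_right (norm_nonneg f)
        (φ.opNorm_le_bound zero_le_one fun x => by rw [hφ, one_mul])
    _ < 1 := hf

theorem ContinuousLinearMap.exists_comp_eq_of_norm_map {φ : E →L[𝕜] F}
    (hφ : ∀ x, ‖φ x‖ = ‖x‖) (g : StrongDual 𝕜 E) :
    ∃ f : StrongDual 𝕜 F, ‖f‖ = ‖g‖ ∧ f.comp φ = g := by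
  let ψ : E →ₗᵢ[𝕜] F := ⟨φ, hφ⟩
  let e := ψ.equivRange
  obtain ⟨f, hfe, hf⟩ := exists_extension_norm_eq ψ.range
    (g.comp e.symm.toLinearIsometry.toContinuousLinearMap)
  refine ⟨f, hf.trans (g.opNorm_comp_linearIsometryEquiv e.symm), ?_⟩
  ext x
  exact (hfe (e x)).trans (by simp)

theorem ContinuousLinearMap.ball_subset_image_comp_of_norm_map {φ : E →L[𝕜] F}
    (hφ : ∀ x, ‖φ x‖ = ‖x‖) :
    ball 0 1 ⊆ (fun f : StrongDual 𝕜 F => f.comp φ) '' ball 0 1 := fun g hg => by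
  obtain ⟨f, hfg, rfl⟩ := φ.exists_comp_eq_of_norm_map hφ g
  exact ⟨f, by rwa [mem_ball_zero_iff, hfg, ← mem_ball_zero_iff], rfl⟩

end

/-- An operator `φ : E → F` between normed spaces is an isometry if and only if its adjoint
`φ* : F* → E*`, `f ↦ f ∘ φ`, maps the open unit ball of `F*` onto the open unit ball
of `E*` (i.e. `φ*` is a coisometry). -/
theorem stmt1 {E F : Type} [NormedAddCommGroup E] [NormedSpace ℂ E]
    [NormedAddCommGroup F] [NormedSpace ℂ F] (φ : E →L[ℂ] F) :
    (∀ x : E, ‖φ x‖ = ‖x‖) ↔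
      (fun f : F →L[ℂ] ℂ => f.comp φ) '' Metric.ball 0 1 =
        Metric.ball (0 : E →L[ℂ] ℂ) 1 := by
  refine ⟨fun hφ => ?_, fun h x => ?_⟩
  · exact (φ.mapsTo_comp_ball_of_norm_map hφ).image_subset.antisymm
      (φ.ball_subset_image_comp_of_norm_map hφ)
  · exact (φ.norm_map_le_of_mapsTo_comp_ball (h ▸ mapsTo_image _ _) x).antisymm
      (φ.norm_le_norm_map_of_ball_subset_image_comp h.ge x)
end

section
/- If a normed space P has the property that every bounded operator from P into any normed space X lifts, with the same norm, across any bounded operator τ : Y → X that maps the closed unit ball of Y onto the closed unit ball of X, then the completion of P has the analogous property for Banach spaces. -/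
/-!
Restrict `φ` to `P`, lift the restriction with `hP`, and extend the lift continuously to the
completion (possible since `Y` is complete). The extension still lifts `φ` by density and has
norm at most `‖φ‖`; conversely `‖φ‖ ≤ ‖τ‖ ‖ψ‖ ≤ ‖ψ‖` because `τ` maps the unit ball into the
unit ball.
-/

open UniformSpace Metric ContinuousLinearMap

namespace ContinuousLinearMap

theorem opNorm_le_one_of_image_closedBall_subset {𝕜 E F : Type*} [NontriviallyNormedField 𝕜]
    [NormedAlgebra ℝ 𝕜] [NormedAddCommGroup E] [NormedSpace 𝕜 E] [NormedAddCommGroup F]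
    [NormedSpace 𝕜 F] {τ : E →L[𝕜] F} (hτ : τ '' closedBall 0 1 ⊆ closedBall 0 1) :
    ‖τ‖ ≤ 1 :=
  opNorm_le_of_unit_norm zero_le_one fun x hx => by
    simpa using hτ (Set.mem_image_of_mem τ (by simp [hx.le]))

end ContinuousLinearMap

namespace UniformSpace.Completion

variable {𝕜 E F G : Type*} [NontriviallyNormedField 𝕜] [NormedAddCommGroup E] [NormedSpace 𝕜 E]
  [NormedAddCommGroup F] [NormedSpace 𝕜 F]

theorem opNorm_comp_toComplL_le (φ : Completion E →L[𝕜] F) :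
    ‖φ.comp toComplL‖ ≤ ‖φ‖ :=
  (opNorm_comp_le _ _).trans <|
    mul_le_of_le_one_right (norm_nonneg φ) (LinearIsometry.norm_toContinuousLinearMap_le _)

variable [CompleteSpace F] (f : E →L[𝕜] F)

theorem extend_toComplL_coe (x : E) : f.extend toComplL (x : Completion E) = f x :=
  f.extend_eq (e := toComplL) denseRange_coe (isUniformInducing_coe E) x

theorem opNorm_extend_toComplL_le : ‖f.extend toComplL‖ ≤ ‖f‖ := by
  simpa using f.opNorm_extend_le (N := 1) (e := toComplL) denseRange_coe fun x => by simp

theorem comp_extend_toComplL [NormedAddCommGroup G] [NormedSpace 𝕜 G] {τ : F →L[𝕜] G}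
    {φ : Completion E →L[𝕜] G} (h : τ.comp f = φ.comp toComplL) :
    τ.comp (f.extend toComplL) = φ :=
  ContinuousLinearMap.coeFn_injective <| Completion.ext (by fun_prop) (by fun_prop) fun x => by
    simpa [extend_toComplL_coe] using congr($h x)

end UniformSpace.Completion

/-- If a normed space `P` is metrically projective (every bounded operator from `P` lifts
with the same norm across any strictly coisometric operator, i.e. one mapping the closed
unit ball onto the closed unit ball, between normed spaces), then the completion of `P`
is metrically projective with respect to Banach spaces. -/
theorem stmt8 {P : Type} [NormedAddCommGroup P] [NormedSpace ℂ P]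
    (hP : ∀ (X Y : Type) [NormedAddCommGroup X] [NormedSpace ℂ X]
        [NormedAddCommGroup Y] [NormedSpace ℂ Y] (τ : Y →L[ℂ] X),
      τ '' Metric.closedBall 0 1 = Metric.closedBall (0 : X) 1 →
      ∀ φ : P →L[ℂ] X, ∃ ψ : P →L[ℂ] Y, τ.comp ψ = φ ∧ ‖ψ‖ = ‖φ‖) :
    ∀ (X Y : Type) [NormedAddCommGroup X] [NormedSpace ℂ X] [CompleteSpace X]
        [NormedAddCommGroup Y] [NormedSpace ℂ Y] [CompleteSpace Y] (τ : Y →L[ℂ] X),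
      τ '' Metric.closedBall 0 1 = Metric.closedBall (0 : X) 1 →
      ∀ φ : UniformSpace.Completion P →L[ℂ] X,
        ∃ ψ : UniformSpace.Completion P →L[ℂ] Y, τ.comp ψ = φ ∧ ‖ψ‖ = ‖φ‖ := by
  intro X Y _ _ _ _ _ _ τ hτ φ
  obtain ⟨ψ₀, hψ₀, hnorm⟩ := hP X Y τ hτ (φ.comp Completion.toComplL)
  set ψ := ψ₀.extend Completion.toComplL
  have hlift : τ.comp ψ = φ := Completion.comp_extend_toComplL ψ₀ hψ₀
  refine ⟨ψ, hlift, le_antisymm ?_ ?_⟩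
  · calc ‖ψ‖ ≤ ‖ψ₀‖ := Completion.opNorm_extend_toComplL_le ψ₀
      _ = ‖φ.comp Completion.toComplL‖ := hnorm
      _ ≤ ‖φ‖ := Completion.opNorm_comp_toComplL_le φ
  · calc ‖φ‖ = ‖τ.comp ψ‖ := by rw [hlift]
      _ ≤ ‖τ‖ * ‖ψ‖ := opNorm_comp_le τ ψ
      _ ≤ ‖ψ‖ :=
        mul_le_of_le_one_left (norm_nonneg ψ) (opNorm_le_one_of_image_closedBall_subset hτ.subset)
end

section
/- Every metrically projective normed space is isometrically isomorphic to l₁⁰(M) for some set M. -/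
open scoped ENNReal

/-- The subspace `l₁⁰(M)` of `l₁(M) = lp (fun _ : M => ℂ) 1` consisting of finitely
supported functions. -/
noncomputable def l10 (M : Type) : Submodule ℂ (lp (fun _ : M => ℂ) 1) where
  carrier := {f | (Function.support (f : M → ℂ)).Finite}
  add_mem' := by
    intro f g hf hg
    refine (hf.union hg).subset ?_
    refine (Function.support_subset_iff'.2 fun m hm => ?_)
    have hm1 : m ∉ Function.support (f : M → ℂ) := fun h => hm (Set.mem_union_left _ h)
    have hm2 : m ∉ Function.support (g : M → ℂ) := fun h => hm (Set.mem_union_right _ h)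
    have : (↑(f + g) : M → ℂ) m = f m + g m := by
      rw [lp.coeFn_add]; rfl
    rw [this, Function.notMem_support.mp hm1, Function.notMem_support.mp hm2, add_zero]
  zero_mem' := by
    have : (↑(0 : lp (fun _ : M => ℂ) 1) : M → ℂ) = 0 := lp.coeFn_zero _ _
    exact Set.finite_empty.subset fun m hm => hm rfl
  smul_mem' := by
    intro c f hf
    refine hf.subset ?_
    refine Function.support_subset_iff'.2 fun m hm => ?_
    have : (↑(c • f) : M → ℂ) m = c • f m := by
      rw [lp.coeFn_smul]; rfl
    rw [this, Function.notMem_support.mp hm, smul_zero]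

/-!
Metric projectivity lifts the identity of `P` through the contractive quotient map
`l₁⁰(B) → P`, `(a_x) ↦ ∑ a_x • x`, where `B` is the closed unit ball of `P`; this gives a linear
isometric section `ψ`. If `u` is an extreme point of `B` and `x` lies in the support of `ψ u`,
splitting off the `x`-coordinate of `ψ u` writes `u` as a convex combination of a unimodular
multiple of `x` and another point of `B`, so `u` is a unimodular multiple of `x`. Hence extreme
points that are not unimodular multiples of each other have disjointly supported images, and `ψ`
turns their linear combinations into `l₁`-sums. Conversely a unit vector whose `ψ`-support is
minimal is extreme, and subtracting multiples of such vectors shrinks supports, so the extreme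
points span `P`. One extreme point from each circle orbit then gives `l₁⁰(M) ≃ P`.
-/

open Function Metric

noncomputable section

namespace lp

variable {M E : Type*} [NormedAddCommGroup E]

theorem hasSum_norm_of_one (f : lp (fun _ : M => E) 1) : HasSum (fun m => ‖f m‖) ‖f‖ := by
  simpa using lp.hasSum_norm (p := 1) (by norm_num) f

theorem support_single_subset {p : ℝ≥0∞} [DecidableEq M] (m : M) (a : E) :
    support (lp.single p m a : lp (fun _ : M => E) p) ⊆ {m} :=
  fun _ hj => by_contra fun h => hj (lp.single_apply_ne p m (E := fun _ : M => E) a h)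

theorem support_smul_subset {p : ℝ≥0∞} {𝕜 : Type*} [NormedRing 𝕜] [Module 𝕜 E]
    [IsBoundedSMul 𝕜 E] (c : 𝕜) (f : lp (fun _ : M => E) p) : support (c • f) ⊆ support f := by
  rw [lp.coeFn_smul]
  exact support_const_smul_subset c f

theorem norm_add_of_disjoint_support {f g : lp (fun _ : M => E) 1}
    (hfg : Disjoint (support f) (support g)) : ‖f + g‖ = ‖f‖ + ‖g‖ := by
  have hpt (m : M) : ‖(f + g) m‖ = ‖f m‖ + ‖g m‖ := by
    by_cases hm : f m = 0
    · simp [hm]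
    · simp [notMem_support.1 (Set.disjoint_left.1 hfg hm)]
  refine (hasSum_norm_of_one (f + g)).unique ?_
  simpa only [hpt] using (hasSum_norm_of_one f).add (hasSum_norm_of_one g)

theorem norm_sum_of_pairwiseDisjoint_support {ι : Type*} {s : Finset ι}
    {f : ι → lp (fun _ : M => E) 1} (hf : (s : Set ι).PairwiseDisjoint fun i => support (f i)) :
    ‖∑ i ∈ s, f i‖ = ∑ i ∈ s, ‖f i‖ := by
  classical
  induction s using Finset.induction_on with
  | empty => simp
  | insert i s hi ih =>
    rw [Finset.coe_insert] at hf
    rw [Finset.sum_insert hi, Finset.sum_insert hi, norm_add_of_disjoint_support,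
      ih (hf.subset (Set.subset_insert _ _))]
    rw [lp.coeFn_sum]
    refine Set.disjoint_left.2 fun m hm hm' => ?_
    obtain ⟨j, hj, hjm⟩ := Finset.exists_ne_zero_of_sum_ne_zero (by simpa using hm')
    exact Set.disjoint_left.1 (hf (Set.mem_insert _ _) (Set.mem_insert_of_mem _ hj)
      (by rintro rfl; exact hi hj)) hm hjm

theorem support_subset_of_mem_openSegment [NormedSpace ℝ E] {f g h : lp (fun _ : M => E) 1}
    (hf : f ∈ openSegment ℝ g h) (hg : ‖g‖ ≤ ‖f‖) (hh : ‖h‖ ≤ ‖f‖) : support g ⊆ support f := by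
  obtain ⟨a, b, ha, hb, hab, rfl⟩ := hf
  intro m hgm
  by_contra hfm
  have hle : (fun m => ‖(a • g + b • h) m‖) ≤ fun m => a * ‖g m‖ + b * ‖h m‖ := fun m => by
    simpa [show (a • g + b • h) m = a • g m + b • h m from rfl, norm_smul, abs_of_pos ha,
      abs_of_pos hb] using norm_add_le (a • g m) (b • h m)
  have hlt : ‖(a • g + b • h) m‖ < a * ‖g m‖ + b * ‖h m‖ := by
    rw [norm_eq_zero.2 (notMem_support.1 hfm)]
    exact add_pos_of_pos_of_nonneg (mul_pos ha (norm_pos_iff.2 hgm)) (by positivity)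
  have hsum_lt : ‖a • g + b • h‖ < a * ‖g‖ + b * ‖h‖ := hasSum_lt hle hlt
    (hasSum_norm_of_one _) (((hasSum_norm_of_one g).mul_left a).add
      ((hasSum_norm_of_one h).mul_left b))
  have hsum_le : a * ‖g‖ + b * ‖h‖ ≤ ‖a • g + b • h‖ := calc
    a * ‖g‖ + b * ‖h‖ ≤ a * ‖a • g + b • h‖ + b * ‖a • g + b • h‖ := by gcongr
    _ = ‖a • g + b • h‖ := by rw [← add_mul, hab, one_mul]
  linarith

end lp

namespace l10

variable {M : Type}

theorem support_finite (f : l10 M) : (support f.1).Finite := f.2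

open Classical in
def single (m : M) (a : ℂ) : l10 M :=
  ⟨lp.single 1 m a, (Set.finite_singleton m).subset (lp.support_single_subset m a)⟩

theorem support_single_subset (m : M) (a : ℂ) : support (single m a).1 ⊆ {m} := by
  classical
  exact lp.support_single_subset m a

theorem single_apply_self (m : M) (a : ℂ) : (single m a).1 m = a := by
  classical
  exact lp.single_apply_self 1 m (E := fun _ => ℂ) a

theorem norm_single (m : M) (a : ℂ) : ‖single m a‖ = ‖a‖ := by
  classical
  exact lp.norm_single (E := fun _ => ℂ) zero_lt_one m a

def toFinsupp : l10 M →ₗ[ℂ] M →₀ ℂ where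
  toFun f := Finsupp.ofSupportFinite _ (support_finite f)
  map_add' f g := by ext; exact congrFun (lp.coeFn_add f.1 g.1) _
  map_smul' c f := by ext; exact congrFun (lp.coeFn_smul c f.1) _

theorem toFinsupp_apply (f : l10 M) (m : M) : toFinsupp f m = f.1 m := rfl

theorem toFinsupp_single (m : M) (a : ℂ) : toFinsupp (single m a) = Finsupp.single m a := by
  classical
  ext j
  exact (congrFun (Finsupp.single_eq_pi_single m a) j).symm

theorem norm_eq_sum (f : l10 M) : ‖f‖ = (toFinsupp f).sum fun _ a => ‖a‖ :=
  (lp.hasSum_norm_of_one f.1).unique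
    (hasSum_sum_of_ne_finset_zero fun m hm => by simpa [toFinsupp_apply] using hm)

variable {P : Type*} [NormedAddCommGroup P] [NormedSpace ℂ P]

def linearCombination (v : M → P) : l10 M →ₗ[ℂ] P :=
  Finsupp.linearCombination ℂ v ∘ₗ toFinsupp

theorem linearCombination_apply (v : M → P) (f : l10 M) :
    linearCombination v f = (toFinsupp f).sum fun m a => a • v m :=
  Finsupp.linearCombination_apply ℂ _

theorem linearCombination_single (v : M → P) (m : M) (a : ℂ) :
    linearCombination v (single m a) = a • v m := by
  simp [linearCombination, toFinsupp_single]

theorem norm_linearCombination_le {v : M → P} (hv : ∀ m, ‖v m‖ ≤ 1) (f : l10 M) :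
    ‖linearCombination v f‖ ≤ ‖f‖ := by
  rw [linearCombination_apply, norm_eq_sum]
  refine (norm_sum_le _ _).trans (Finset.sum_le_sum fun m _ => ?_)
  simpa [norm_smul] using mul_le_mul_of_nonneg_left (hv m) (norm_nonneg (toFinsupp f m))

end l10

section BallCover

variable (P : Type) [NormedAddCommGroup P] [NormedSpace ℂ P]

def MetricallyProjective : Prop :=
  ∀ (X Y : Type) [NormedAddCommGroup X] [NormedSpace ℂ X] [NormedAddCommGroup Y]
    [NormedSpace ℂ Y] (τ : Y →L[ℂ] X), τ '' closedBall 0 1 = closedBall (0 : X) 1 →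
    ∀ φ : P →L[ℂ] X, ∃ ψ : P →L[ℂ] Y, τ.comp ψ = φ ∧ ‖ψ‖ = ‖φ‖

def ballCover : l10 (closedBall (0 : P) 1) →L[ℂ] P :=
  (l10.linearCombination ((↑) : closedBall (0 : P) 1 → P)).mkContinuous 1 fun f => by
    simpa using l10.norm_linearCombination_le (fun x => mem_closedBall_zero_iff.1 x.2) f

variable {P}

theorem ballCover_single (x : closedBall (0 : P) 1) (a : ℂ) :
    ballCover P (l10.single x a) = a • (x : P) :=
  l10.linearCombination_single _ x a

theorem norm_ballCover_le (f : l10 (closedBall (0 : P) 1)) : ‖ballCover P f‖ ≤ ‖f‖ :=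
  l10.norm_linearCombination_le (fun x => mem_closedBall_zero_iff.1 x.2) f

theorem ballCover_image_closedBall : ballCover P '' closedBall 0 1 = closedBall 0 1 := by
  refine subset_antisymm ?_ fun x hx => ⟨l10.single ⟨x, hx⟩ 1, ?_, by simp [ballCover_single]⟩
  · rintro _ ⟨f, hf, rfl⟩
    exact mem_closedBall_zero_iff.2 ((norm_ballCover_le f).trans (mem_closedBall_zero_iff.1 hf))
  · rw [mem_closedBall_zero_iff, l10.norm_single, norm_one]

theorem MetricallyProjective.exists_isometric_section (hP : MetricallyProjective P) :
    ∃ ψ : P →ₗᵢ[ℂ] l10 (closedBall (0 : P) 1), ∀ p, ballCover P (ψ p) = p := by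
  obtain ⟨ψ, hψ, hnorm⟩ :=
    hP P (l10 (closedBall (0 : P) 1)) (ballCover P) ballCover_image_closedBall (.id ℂ P)
  have hsection (p : P) : ballCover P (ψ p) = p := congrArg (· p) hψ
  refine ⟨⟨ψ.toLinearMap, fun p => le_antisymm ?_ ?_⟩, hsection⟩
  · calc ‖ψ p‖ ≤ ‖ψ‖ * ‖p‖ := ψ.le_opNorm p
      _ ≤ ‖p‖ := by
        rw [hnorm]; exact mul_le_of_le_one_left (norm_nonneg p) ContinuousLinearMap.norm_id_le
  · calc ‖p‖ = ‖ballCover P (ψ p)‖ := by rw [hsection]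
      _ ≤ ‖ψ p‖ := norm_ballCover_le _

end BallCover

-- Intersecting with the sphere only discards `0`, which is extreme when `P` is trivial.
def unitExtremePoints (P : Type*) [NormedAddCommGroup P] [NormedSpace ℂ P] : Set P :=
  (closedBall (0 : P) 1).extremePoints ℝ ∩ sphere 0 1

namespace LinearIsometry

variable {P : Type*} [NormedAddCommGroup P] [NormedSpace ℂ P] {B : Type*}
  (ψ : P →ₗᵢ[ℂ] lp (fun _ : B => ℂ) 1)

theorem support_nonempty {r : P} (hr : r ≠ 0) : (support (ψ r)).Nonempty :=
  support_nonempty_iff.2 fun h => hr ((map_eq_zero_iff ψ ψ.injective).1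
    (lp.eq_zero_iff_coeFn_eq_zero.2 h))

theorem support_sub_smul_ssubset {p r : P} {S : Set B} {γ : B} (hp : support (ψ p) ⊆ S)
    (hr : support (ψ r) ⊆ S) (hγ : γ ∈ support (ψ r)) :
    support (ψ (p - (ψ p γ / ψ r γ) • r)) ⊂ S := by
  have hval (b : B) : ψ (p - (ψ p γ / ψ r γ) • r) b = ψ p b - ψ p γ / ψ r γ * ψ r b := by
    simp only [map_sub, map_smul, lp.coeFn_sub, lp.coeFn_smul, Pi.sub_apply, Pi.smul_apply,
      smul_eq_mul]
  refine (Set.ssubset_iff_of_subset fun b hb => ?_).2 ⟨γ, hr hγ, ?_⟩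
  · by_contra hbS
    rw [mem_support, hval, notMem_support.1 fun h => hbS (hp h),
      notMem_support.1 fun h => hbS (hr h), mul_zero, sub_zero] at hb
    exact hb rfl
  · rw [mem_support, hval, div_mul_cancel₀ _ hγ, sub_self]
    exact fun h => h rfl

theorem mem_unitExtremePoints_of_minimal_support {u : P} (hu : ‖u‖ = 1)
    (hmin : ∀ r, support (ψ r) ⊂ support (ψ u) → r = 0) : u ∈ unitExtremePoints P := by
  have hu0 : u ≠ 0 := by rintro rfl; simp at hu
  obtain ⟨γ, hγ⟩ := ψ.support_nonempty hu0
  have hmul (h : P) (hh : h ∈ closedBall (0 : P) 1) (k : P) (hk : k ∈ closedBall (0 : P) 1)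
      (hseg : u ∈ openSegment ℝ h k) : h = (ψ h γ / ψ u γ) • u := by
    have hψseg : ψ u ∈ openSegment ℝ (ψ h) (ψ k) :=
      image_openSegment ℝ (ψ.toLinearMap.restrictScalars ℝ).toAffineMap h k ▸ ⟨u, hseg, rfl⟩
    refine sub_eq_zero.1 (hmin _ (ψ.support_sub_smul_ssubset ?_ subset_rfl hγ))
    refine lp.support_subset_of_mem_openSegment hψseg ?_ ?_ <;>
      rw [ψ.norm_map, ψ.norm_map, hu] <;> exact mem_closedBall_zero_iff.1 ‹_›
  refine ⟨⟨mem_closedBall_zero_iff.2 hu.le, fun h hh k hk hseg => ?_⟩,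
    mem_sphere_zero_iff_norm.2 hu⟩
  have hh' := hmul h hh k hk hseg
  have hk' := hmul k hk h hh (openSegment_symm ℝ h k ▸ hseg)
  set a := ψ h γ / ψ u γ
  set b := ψ k γ / ψ u γ
  have hdisc {c : ℂ} {x : P} (hx : x ∈ closedBall (0 : P) 1) (hxc : x = c • u) :
      c ∈ closedBall (0 : ℂ) 1 := by
    rw [mem_closedBall_zero_iff] at hx ⊢
    rwa [hxc, norm_smul, hu, mul_one] at hx
  have hone : (1 : ℂ) ∈ openSegment ℝ a b := by
    obtain ⟨s, t, hs, ht, hst, hstu⟩ := hseg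
    refine ⟨s, t, hs, ht, hst, smul_left_injective ℂ hu0 ?_⟩
    simp only [add_smul, smul_assoc, ← hh', ← hk', one_smul, hstu]
  have ha : a = 1 := (StrictConvexSpace.sphere_subset_extremePoints_closedBall (0 : ℂ)
    one_ne_zero (by simp : (1 : ℂ) ∈ sphere 0 1)).2 (hdisc hh hh') (hdisc hk hk') hone
  rw [hh', ha, one_smul]

theorem mem_span_unitExtremePoints (hfin : ∀ p, (support (ψ p)).Finite) (p : P) :
    p ∈ Submodule.span ℂ (unitExtremePoints P) := by
  induction hn : (support (ψ p)).ncard using Nat.strong_induction_on generalizing p with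
  | _ n ih =>
  by_cases hmin : ∀ r, support (ψ r) ⊂ support (ψ p) → r = 0
  · rcases eq_or_ne p 0 with rfl | hp
    · exact zero_mem _
    have hp' : (‖p‖ : ℂ) ≠ 0 := by simpa using hp
    have hsupp : support (ψ ((‖p‖ : ℂ)⁻¹ • p)) = support (ψ p) := by
      rw [map_smul, lp.coeFn_smul, support_const_smul_of_ne_zero _ _ (inv_ne_zero hp')]
    have hu := ψ.mem_unitExtremePoints_of_minimal_support (u := (‖p‖ : ℂ)⁻¹ • p)
      (by simp [norm_smul, hp]) (hsupp ▸ hmin)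
    rw [← smul_inv_smul₀ hp' p]
    exact Submodule.smul_mem _ _ (Submodule.subset_span hu)
  · push Not at hmin
    obtain ⟨r, hrp, hr⟩ := hmin
    obtain ⟨γ, hγ⟩ := ψ.support_nonempty hr
    have hlt {q : P} (hq : support (ψ q) ⊂ support (ψ p)) : (support (ψ q)).ncard < n :=
      hn ▸ Set.ncard_lt_ncard hq (hfin p)
    have hrest := ψ.support_sub_smul_ssubset subset_rfl hrp.subset hγ
    rw [← sub_add_cancel p ((ψ p γ / ψ r γ) • r)]
    exact add_mem (ih _ (hlt hrest) _ rfl) (Submodule.smul_mem _ _ (ih _ (hlt hrp) _ rfl))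

end LinearIsometry

section IsometricSection

variable {P : Type} [NormedAddCommGroup P] [NormedSpace ℂ P]
  (ψ : P →ₗᵢ[ℂ] l10 (closedBall (0 : P) 1))

theorem exists_circle_smul_eq_of_mem_support (hψ : ∀ p, ballCover P (ψ p) = p) {u : P}
    (hu : u ∈ unitExtremePoints P) {γ : closedBall (0 : P) 1} (hγ : γ ∈ support (ψ u).1) :
    ∃ z : Circle, z • (γ : P) = u := by
  set c := (ψ u).1 γ
  have hc : c ≠ 0 := hγ
  set r := ψ u - l10.single γ c
  have hdisj : Disjoint (support (l10.single γ c).1) (support r.1) := by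
    refine Set.disjoint_of_subset_left (l10.support_single_subset γ c)
      (Set.disjoint_singleton_left.2 fun h => h ?_)
    simp [r, l10.single_apply_self, c]
  have hnorm : ‖c‖ + ‖r‖ = 1 := calc
    ‖c‖ + ‖r‖ = ‖l10.single γ c + r‖ := by
      rw [← l10.norm_single γ c]; exact (lp.norm_add_of_disjoint_support hdisj).symm
    _ = 1 := by rw [add_sub_cancel, ψ.norm_map, mem_sphere_zero_iff_norm.1 hu.2]
  have hu_eq : c • (γ : P) + ballCover P r = u := by
    rw [← ballCover_single, ← map_add, add_sub_cancel, hψ]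
  let z : Circle := ⟨c / ‖c‖, by simp [Submonoid.unitSphere, hc]⟩
  have hz (x : P) : ‖c‖ • z • x = c • x := by
    rw [Circle.smul_def, ← Complex.coe_smul, smul_smul]
    congr 1
    change (‖c‖ : ℂ) * (c / ‖c‖) = c
    field_simp [norm_ne_zero_iff.2 hc]
  refine ⟨z, ?_⟩
  rcases eq_or_ne r 0 with hr | hr
  · rw [hr, norm_zero, add_zero] at hnorm
    rw [hr, map_zero, add_zero] at hu_eq
    rw [← hu_eq, ← hz, hnorm, one_smul]
  have hr' : 0 < ‖r‖ := norm_pos_iff.2 hr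
  have hseg : u ∈ openSegment ℝ (z • (γ : P)) (‖r‖⁻¹ • ballCover P r) :=
    ⟨‖c‖, ‖r‖, norm_pos_iff.2 hc, hr', hnorm, by rw [hz, smul_inv_smul₀ hr'.ne', hu_eq]⟩
  refine hu.1.2 ?_ ?_ hseg
  · rw [mem_closedBall_zero_iff, Circle.norm_smul]
    exact mem_closedBall_zero_iff.1 γ.2
  · rw [mem_closedBall_zero_iff, norm_smul, norm_inv, norm_norm]
    exact inv_mul_le_one_of_le₀ (norm_ballCover_le r) hr'.le

theorem disjoint_support_of_not_orbitRel (hψ : ∀ p, ballCover P (ψ p) = p) {u v : P}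
    (hu : u ∈ unitExtremePoints P) (hv : v ∈ unitExtremePoints P)
    (huv : ¬ MulAction.orbitRel Circle P u v) :
    Disjoint (support (ψ u).1) (support (ψ v).1) := by
  refine Set.disjoint_left.2 fun γ hγu hγv => huv ?_
  obtain ⟨z, rfl⟩ := exists_circle_smul_eq_of_mem_support ψ hψ hu hγu
  obtain ⟨w, rfl⟩ := exists_circle_smul_eq_of_mem_support ψ hψ hv hγv
  exact ⟨z * w⁻¹, show (z * w⁻¹) • w • (γ : P) = z • γ by rw [mul_smul, inv_smul_smul]⟩

end IsometricSection

def ExtremeOrbit (P : Type) [NormedAddCommGroup P] [NormedSpace ℂ P] : Type :=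
  Quotient ((MulAction.orbitRel Circle P).comap ((↑) : unitExtremePoints P → P))

namespace ExtremeOrbit

variable {P : Type} [NormedAddCommGroup P] [NormedSpace ℂ P]

def rep (m : ExtremeOrbit P) : P := (Quotient.out m : unitExtremePoints P)

theorem rep_mem (m : ExtremeOrbit P) : m.rep ∈ unitExtremePoints P :=
  (Quotient.out m).2

theorem not_orbitRel_rep {m m' : ExtremeOrbit P} (h : m ≠ m') :
    ¬ MulAction.orbitRel Circle P m.rep m'.rep :=
  fun hr => h (Quotient.out_equiv_out.1 hr)

theorem exists_smul_rep {u : P} (hu : u ∈ unitExtremePoints P) :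
    ∃ (m : ExtremeOrbit P) (z : Circle), z • m.rep = u := by
  obtain ⟨z, hz⟩ := Quotient.mk_out
    (s := (MulAction.orbitRel Circle P).comap ((↑) : unitExtremePoints P → P)) ⟨u, hu⟩
  exact ⟨_, z⁻¹, by rw [rep, inv_smul_eq_iff]; exact hz.symm⟩

theorem norm_linearCombination_rep (ψ : P →ₗᵢ[ℂ] l10 (closedBall (0 : P) 1))
    (hψ : ∀ p, ballCover P (ψ p) = p) (f : l10 (ExtremeOrbit P)) :
    ‖l10.linearCombination rep f‖ = ‖f‖ := by
  set g := l10.toFinsupp f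
  have hsum : (ψ (l10.linearCombination rep f)).1 = ∑ m ∈ g.support, g m • (ψ m.rep).1 := by
    simp [l10.linearCombination_apply, Finsupp.sum, g]
  have hdisj : (g.support : Set (ExtremeOrbit P)).PairwiseDisjoint
      fun m => support (g m • (ψ m.rep).1) := fun m _ m' _ hmm' =>
    (disjoint_support_of_not_orbitRel ψ hψ m.rep_mem m'.rep_mem (not_orbitRel_rep hmm')).mono
      (lp.support_smul_subset _ _) (lp.support_smul_subset _ _)
  calc ‖l10.linearCombination rep f‖ = ‖(ψ (l10.linearCombination rep f)).1‖ :=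
        (ψ.norm_map _).symm
    _ = ∑ m ∈ g.support, ‖g m‖ := by
      rw [hsum, lp.norm_sum_of_pairwiseDisjoint_support hdisj]
      refine Finset.sum_congr rfl fun m _ => ?_
      rw [norm_smul, ← Submodule.coe_norm, ψ.norm_map, mem_sphere_zero_iff_norm.1 m.rep_mem.2,
        mul_one]
    _ = ‖f‖ := (l10.norm_eq_sum f).symm

theorem surjective_linearCombination_rep {B : Type} (ψ : P →ₗᵢ[ℂ] l10 B) :
    Surjective (l10.linearCombination (rep (P := P))) := by
  intro p
  have hspan := ((l10 B).subtypeₗᵢ.comp ψ).mem_span_unitExtremePoints (fun p => (ψ p).2) p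
  refine (Submodule.span_le.2 ?_ hspan : p ∈ LinearMap.range (l10.linearCombination rep))
  intro u hu
  obtain ⟨m, z, rfl⟩ := exists_smul_rep hu
  exact ⟨l10.single m z, l10.linearCombination_single _ m z⟩

def linearIsometryEquiv (ψ : P →ₗᵢ[ℂ] l10 (closedBall (0 : P) 1))
    (hψ : ∀ p, ballCover P (ψ p) = p) : l10 (ExtremeOrbit P) ≃ₗᵢ[ℂ] P :=
  LinearIsometryEquiv.ofSurjective
    (⟨l10.linearCombination rep, norm_linearCombination_rep ψ hψ⟩ :
      l10 (ExtremeOrbit P) →ₗᵢ[ℂ] P)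
    (surjective_linearCombination_rep ψ)

end ExtremeOrbit

end

/-- Every metrically projective normed space is isometrically isomorphic to `l₁⁰(M)` for
some set `M`. Metric projectivity: for every bounded operator `τ : Y → X` between normed
spaces mapping the closed unit ball of `Y` onto the closed unit ball of `X`, every bounded
operator `φ : P → X` has a lifting `ψ` with `τ ∘ ψ = φ` and `‖ψ‖ = ‖φ‖`. -/
theorem stmt15 (P : Type) [NormedAddCommGroup P] [NormedSpace ℂ P]
    (hP : ∀ (X Y : Type) [NormedAddCommGroup X] [NormedSpace ℂ X]
        [NormedAddCommGroup Y] [NormedSpace ℂ Y] (τ : Y →L[ℂ] X),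
      τ '' Metric.closedBall 0 1 = Metric.closedBall (0 : X) 1 →
      ∀ φ : P →L[ℂ] X, ∃ ψ : P →L[ℂ] Y, τ.comp ψ = φ ∧ ‖ψ‖ = ‖φ‖) :
    ∃ M : Type, Nonempty (P ≃ₗᵢ[ℂ] l10 M) := by
  obtain ⟨ψ, hψ⟩ := MetricallyProjective.exists_isometric_section (P := P) hP
  exact ⟨ExtremeOrbit P, ⟨(ExtremeOrbit.linearIsometryEquiv ψ hψ).symm⟩⟩
end

section
/- In any category, if a family of natural endotransformations {J_ν} of the identity functor satisfies: each component J_ν^X is a bimorphism, and for each ν there exist λ, μ with J_ν = J_λ J_μ (an asymptotic structure), then: given an asymptotically projective object P, an asymptotically admissible epimorphism τ : Y → X, and a permitted morphism φ : P → X, the set of liftings of φ across τ contains a permitted morphism. -/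
/-!
Split `J_ν = J_λ J_μ`. Then `J_μ^P ≫ φ̃` is still permitted, so projectivity lifts it
across `τ`, and precomposing that lift with `J_λ^P` gives a permitted lift of `φ`.
-/

open CategoryTheory

/-- `φ` is a permitted morphism with respect to the family `J` of natural transformations of
the identity functor: `φ = φ̃ ∘ J_ν^X` for some `ν` and `φ̃`. -/
def Permitted {K : Type*} [Category K] {Λ : Type*} (J : Λ → (𝟭 K ⟶ 𝟭 K))
    {X Y : K} (φ : X ⟶ Y) : Prop :=
  ∃ (ν : Λ) (φ' : X ⟶ Y), φ = (J ν).app X ≫ φ'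

/-- `τ : Y ⟶ X` is an asymptotically admissible epimorphism: for every `ν` there is
`ρ_ν : □X ⟶ □Y` with `□(τ) ∘ ρ_ν ∘ □(J_ν^X) = □(J_ν^X)`. -/
def AsymAdm {K L : Type*} [Category K] [Category L] (box : K ⥤ L) {Λ : Type*}
    (J : Λ → (𝟭 K ⟶ 𝟭 K)) {Y X : K} (τ : Y ⟶ X) : Prop :=
  ∀ ν, ∃ ρ : box.obj X ⟶ box.obj Y,
    box.map ((J ν).app X) ≫ ρ ≫ box.map τ = box.map ((J ν).app X)

/-- `P` is asymptotically projective: every permitted morphism from `P` lifts across every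
asymptotically admissible epimorphism. -/
def AsymProj {K L : Type*} [Category K] [Category L] (box : K ⥤ L) {Λ : Type*}
    (J : Λ → (𝟭 K ⟶ 𝟭 K)) (P : K) : Prop :=
  ∀ {Y X : K} (τ : Y ⟶ X), AsymAdm box J τ → ∀ φ : P ⟶ X, Permitted J φ →
    ∃ ψ : P ⟶ Y, ψ ≫ τ = φ

theorem Permitted.exists_eq_app_comp_permitted {K : Type*} [Category K] {Λ : Type*}
    {J : Λ → (𝟭 K ⟶ 𝟭 K)} (hcomp : ∀ ν : Λ, ∃ lam mu : Λ, J ν = J lam ≫ J mu)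
    {X Y : K} {φ : X ⟶ Y} (hφ : Permitted J φ) :
    ∃ (lam : Λ) (φ' : X ⟶ Y), Permitted J φ' ∧ φ = (J lam).app X ≫ φ' := by
  obtain ⟨ν, φ', rfl⟩ := hφ
  obtain ⟨lam, mu, hν⟩ := hcomp ν
  refine ⟨lam, (J mu).app X ≫ φ', ⟨mu, φ', rfl⟩, ?_⟩
  rw [hν, NatTrans.comp_app, Category.assoc]

theorem stmt18_general {K L : Type*} [Category K] [Category L] (box : K ⥤ L)
    {Λ : Type*} (J : Λ → (𝟭 K ⟶ 𝟭 K))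
    (hcomp : ∀ ν : Λ, ∃ lam mu : Λ, J ν = J lam ≫ J mu)
    (P : K) (hP : AsymProj box J P)
    {Y X : K} (τ : Y ⟶ X) (hτ : AsymAdm box J τ)
    (φ : P ⟶ X) (hφ : Permitted J φ) :
    ∃ ψ : P ⟶ Y, Permitted J ψ ∧ ψ ≫ τ = φ := by
  obtain ⟨lam, φ', hφ', rfl⟩ := hφ.exists_eq_app_comp_permitted hcomp
  obtain ⟨ψ', hψ'⟩ := hP τ hτ φ' hφ'
  exact ⟨(J lam).app P ≫ ψ', ⟨lam, ψ', rfl⟩, by rw [Category.assoc, hψ']⟩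

/-- In an asymptotic category (a faithful `□ : 𝒦 ⥤ ℒ` together with a family `{J_ν}` of
natural endotransformations of the identity functor whose components are bimorphisms and
such that each `J_ν` factors as `J_λ J_μ`): if `P` is asymptotically projective,
`τ : Y ⟶ X` is an asymptotically admissible epimorphism and `φ : P ⟶ X` is permitted, then
the set of liftings of `φ` across `τ` contains a permitted morphism. -/
theorem stmt18 {K L : Type*} [Category K] [Category L] (box : K ⥤ L) [box.Faithful]
    {Λ : Type*} (J : Λ → (𝟭 K ⟶ 𝟭 K))
    (hbi : ∀ (ν : Λ) (X : K), Mono ((J ν).app X) ∧ Epi ((J ν).app X))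
    (hcomp : ∀ ν : Λ, ∃ lam mu : Λ, J ν = J lam ≫ J mu)
    (P : K) (hP : AsymProj box J P)
    {Y X : K} (τ : Y ⟶ X) (hτ : AsymAdm box J τ)
    (φ : P ⟶ X) (hφ : Permitted J φ) :
    ∃ ψ : P ⟶ Y, Permitted J ψ ∧ ψ ≫ τ = φ :=
  stmt18_general box J hcomp P hP τ hτ φ hφ
end

section
/- In a freedom-loving asymptotic category, an object P is asymptotically projective if and only if it is an asymptotic retract of a free object, i.e., there exists a free object F and a morphism σ : F → P such that for every ν there is ζ_ν : P → F with σζ_ν = J_ν^P. -/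
/-!
A free object `F` is asymptotically projective: a permitted `J_λ ≫ φ'` out of `F` corresponds to
`f ≫ □J_λ` on the base, and the asymptotic section `ρ_λ` of `□τ` lifts that through `□τ`.
Asymptotic projectivity passes to asymptotic retracts, because `J_ν = J_λ J_μ` lets `J_λ` be
pushed past `ζ_μ` by naturality. Conversely, `σ : F(□P) ⟶ P` adjoint to `𝟙 (□P)` has `□σ` split
by the unit, so it is admissible, and lifting `J_ν^P` along it gives `ζ_ν`.
-/

open CategoryTheory

section

variable {K L : Type*} [Category K] [Category L] {Λ : Type*} {J : Λ → (𝟭 K ⟶ 𝟭 K)}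

lemma permitted_app (ν : Λ) (X : K) : Permitted J ((J ν).app X) :=
  ⟨ν, 𝟙 X, (Category.comp_id _).symm⟩

lemma permitted_app_comp (ν : Λ) {X Y : K} (φ : X ⟶ Y) : Permitted J ((J ν).app X ≫ φ) :=
  ⟨ν, φ, rfl⟩

lemma asymAdm_of_map_splitEpi (box : K ⥤ L) {Y X : K} {τ : Y ⟶ X}
    {η : box.obj X ⟶ box.obj Y} (hη : η ≫ box.map τ = 𝟙 _) : AsymAdm box J τ :=
  fun _ => ⟨η, by rw [hη]; exact Category.comp_id _⟩

lemma app_comp_eq_comp_app (ν : Λ) {X Y : K} (f : X ⟶ Y) :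
    (J ν).app X ≫ f = f ≫ (J ν).app Y :=
  ((J ν).naturality f).symm

lemma asymProj_of_asymRetract {box : K ⥤ L}
    (hcomp : ∀ ν : Λ, ∃ lam mu : Λ, J ν = J lam ≫ J mu) {F P : K} (hF : AsymProj box J F)
    (σ : F ⟶ P) (hσ : ∀ ν : Λ, ∃ ζ : P ⟶ F, ζ ≫ σ = (J ν).app P) : AsymProj box J P := by
  rintro Y X τ hτ _ ⟨ν, φ, rfl⟩
  obtain ⟨lam, mu, hν⟩ := hcomp ν
  obtain ⟨ζ, hζ⟩ := hσ mu
  obtain ⟨ψ, hψ⟩ := hF τ hτ _ (permitted_app_comp lam (σ ≫ φ))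
  refine ⟨ζ ≫ ψ, ?_⟩
  calc (ζ ≫ ψ) ≫ τ = ζ ≫ (J lam).app F ≫ σ ≫ φ := by rw [Category.assoc, hψ]
    _ = (J lam).app P ≫ (ζ ≫ σ) ≫ φ := by
        rw [← Category.assoc, ← app_comp_eq_comp_app, Category.assoc, Category.assoc]
    _ = (J ν).app P ≫ φ := by rw [hζ, hν, NatTrans.comp_app, Category.assoc]

end

section Free

variable {K L : Type*} [Category K] [Category L] (box : K ⥤ L) {Λ : Type*} {J : Λ → (𝟭 K ⟶ 𝟭 K)}
  {F : K}

lemma asymProj_of_free {M : L} {e : ∀ X : K, (M ⟶ box.obj X) ≃ (F ⟶ X)}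
    (he : ∀ {X Y : K} (g : X ⟶ Y) (f : M ⟶ box.obj X), e Y (f ≫ box.map g) = e X f ≫ g) :
    AsymProj box J F := by
  rintro Y X τ hτ _ ⟨lam, φ, rfl⟩
  obtain ⟨ρ, hρ⟩ := hτ lam
  set f := (e X).symm φ
  refine ⟨e Y (f ≫ box.map ((J lam).app X) ≫ ρ), ?_⟩
  calc e Y (f ≫ box.map ((J lam).app X) ≫ ρ) ≫ τ
      = e X (f ≫ box.map ((J lam).app X)) := by
        rw [← he, Category.assoc, Category.assoc, hρ]
    _ = (J lam).app F ≫ φ := by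
        rw [he, Equiv.apply_symm_apply, app_comp_eq_comp_app]

lemma map_free_counit_splitEpi {P : K} {e : ∀ X : K, (box.obj P ⟶ box.obj X) ≃ (F ⟶ X)}
    (he : ∀ {X Y : K} (g : X ⟶ Y) (f : box.obj P ⟶ box.obj X), e Y (f ≫ box.map g) = e X f ≫ g) :
    (e F).symm (𝟙 F) ≫ box.map (e P (𝟙 _)) = 𝟙 _ :=
  (e P).injective (by rw [he, Equiv.apply_symm_apply, Category.id_comp])

end Free

theorem stmt19_general {K L : Type*} [Category K] [Category L] (box : K ⥤ L)
    {Λ : Type*} (J : Λ → (𝟭 K ⟶ 𝟭 K))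
    (hcomp : ∀ ν : Λ, ∃ lam mu : Λ, J ν = J lam ≫ J mu)
    (hfree : ∀ M : L, ∃ (Fr : K) (e : ∀ X : K, (M ⟶ box.obj X) ≃ (Fr ⟶ X)),
      ∀ {X Y : K} (g : X ⟶ Y) (f : M ⟶ box.obj X), e Y (f ≫ box.map g) = e X f ≫ g)
    (P : K) :
    AsymProj box J P ↔
      ∃ (M : L) (Fr : K) (e : ∀ X : K, (M ⟶ box.obj X) ≃ (Fr ⟶ X)),
        (∀ {X Y : K} (g : X ⟶ Y) (f : M ⟶ box.obj X),
          e Y (f ≫ box.map g) = e X f ≫ g) ∧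
        ∃ σ : Fr ⟶ P, ∀ ν : Λ, ∃ ζ : P ⟶ Fr, ζ ≫ σ = (J ν).app P := by
  constructor
  · intro hP
    obtain ⟨F, e, he⟩ := hfree (box.obj P)
    have hσ : AsymAdm box J (e P (𝟙 _)) :=
      asymAdm_of_map_splitEpi box (map_free_counit_splitEpi box he)
    exact ⟨box.obj P, F, e, he, e P (𝟙 _), fun ν => hP _ hσ _ (permitted_app ν P)⟩
  · rintro ⟨M, F, e, he, σ, hσ⟩
    exact asymProj_of_asymRetract hcomp (asymProj_of_free box he) σ hσ

/-- In a freedom-loving asymptotic category, an object `P` is asymptotically projective if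
and only if it is an asymptotic retract of a free object: there exist a free object `F`
(an object with bijections `h_ℒ(M, □X) ≅ h_𝒦(F, X)` natural in `X`, for some base `M`)
and a morphism `σ : F ⟶ P` such that for every `ν` there is `ζ_ν : P ⟶ F` with
`σ ∘ ζ_ν = J_ν^P`. -/
theorem stmt19 {K L : Type*} [Category K] [Category L] (box : K ⥤ L) [box.Faithful]
    {Λ : Type*} (J : Λ → (𝟭 K ⟶ 𝟭 K))
    (hbi : ∀ (ν : Λ) (X : K), Mono ((J ν).app X) ∧ Epi ((J ν).app X))
    (hcomp : ∀ ν : Λ, ∃ lam mu : Λ, J ν = J lam ≫ J mu)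
    (hfree : ∀ M : L, ∃ (Fr : K) (e : ∀ X : K, (M ⟶ box.obj X) ≃ (Fr ⟶ X)),
      ∀ {X Y : K} (g : X ⟶ Y) (f : M ⟶ box.obj X), e Y (f ≫ box.map g) = e X f ≫ g)
    (P : K) :
    AsymProj box J P ↔
      ∃ (M : L) (Fr : K) (e : ∀ X : K, (M ⟶ box.obj X) ≃ (Fr ⟶ X)),
        (∀ {X Y : K} (g : X ⟶ Y) (f : M ⟶ box.obj X),
          e Y (f ≫ box.map g) = e X f ≫ g) ∧
        ∃ σ : Fr ⟶ P, ∀ ν : Λ, ∃ ζ : P ⟶ Fr, ζ ≫ σ = (J ν).app P :=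
  stmt19_general box J hcomp hfree P
end
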